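/- Public-coin soundness algebra: Let ρ, σ, τ be density matrices on ℂ^n, let ζ ≥ 0, and let F(a,b) = Tr(√(√a · b · √a)). If F(σ,τ)² ≤ ζ, then (1/2)·F(σ,ρ)² + (1/2)·F(ρ,τ)² ≤ 1/2 + √ζ/2. -/

import Mathlib

open Matrix
open scoped ComplexOrder

namespace Matrix.PosSemidef

/-- The positive semidefinite square root (the definition Mathlib used to provide). -/
noncomputable def sqrt {n : ℕ} {A : Matrix (Fin n) (Fin n) ℂ} (hA : A.PosSemidef) :
    Matrix (Fin n) (Fin n) ℂ :=
  hA.1.eigenvectorUnitary.1 * diagonal ((↑) ∘ Real.sqrt ∘ hA.1.eigenvalues) *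
    (star hA.1.eigenvectorUnitary : Matrix (Fin n) (Fin n) ℂ)

lemma posSemidef_sqrt {n : ℕ} {A : Matrix (Fin n) (Fin n) ℂ} (hA : A.PosSemidef) :
    hA.sqrt.PosSemidef := by
  have hd : (diagonal ((↑) ∘ Real.sqrt ∘ hA.1.eigenvalues : Fin n → ℂ)).PosSemidef :=
    posSemidef_diagonal_iff.mpr (fun i => Complex.zero_le_real.mpr (Real.sqrt_nonneg _))
  have h := hd.mul_mul_conjTranspose_same (hA.1.eigenvectorUnitary : Matrix (Fin n) (Fin n) ℂ)
  convert h using 1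
  simp [sqrt, star_eq_conjTranspose]

end Matrix.PosSemidef

/-- `√a * b * √a` is positive semidefinite whenever `a` and `b` are. -/
lemma sqrt_mul_mul_sqrt_posSemidef {n : ℕ} {a b : Matrix (Fin n) (Fin n) ℂ}
    (ha : a.PosSemidef) (hb : b.PosSemidef) :
    (ha.sqrt * b * ha.sqrt).PosSemidef := by
  have h := hb.mul_mul_conjTranspose_same ha.sqrt
  rwa [ha.posSemidef_sqrt.isHermitian.eq] at h

/-- The fidelity `F(a, b) = Tr(√(√a · b · √a))` of two positive semidefinite matrices. -/
noncomputable def fidelity {n : ℕ} {a b : Matrix (Fin n) (Fin n) ℂ}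
    (ha : a.PosSemidef) (hb : b.PosSemidef) : ℝ :=
  ((sqrt_mul_mul_sqrt_posSemidef ha hb).sqrt.trace).re

/-!
By Uhlmann's theorem, `F(a, b) = max_U |Tr(√a U √b)|` over unitaries `U`, the maximum being
attained through the polar decomposition of `√b √a`. As vectors of the Hilbert–Schmidt space,
where `⟪X, Y⟫ = Tr(Xᴴ Y)`, the matrices `U √a` are unit vectors for density matrices `a`.
Choosing the unitaries so that the pairs `(σ, ρ)` and `(ρ, τ)` attain their fidelities gives unit
vectors `u, v, w` with `⟪u, v⟫ = F(σ, ρ)`, `⟪v, w⟫ = F(ρ, τ)` and `‖⟪u, w⟫‖ ≤ F(σ, τ)`, and any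
three unit vectors satisfy `‖⟪u, v⟫‖² + ‖⟪v, w⟫‖² ≤ 1 + ‖⟪u, w⟫‖`.
-/

open scoped InnerProductSpace

section InnerProductSpace

variable {𝕜 E : Type*} [RCLike 𝕜] [NormedAddCommGroup E] [InnerProductSpace 𝕜 E]

theorem norm_inner_sq_add_norm_inner_sq_le {u v w : E} (hu : ‖u‖ = 1) (hv : ‖v‖ = 1)
    (hw : ‖w‖ = 1) :
    ‖⟪u, v⟫_𝕜‖ ^ 2 + ‖⟪v, w⟫_𝕜‖ ^ 2 ≤ 1 + ‖⟪u, w⟫_𝕜‖ := by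
  set α := ⟪u, v⟫_𝕜
  set β := ⟪v, w⟫_𝕜
  set t := ‖α‖ ^ 2 + ‖β‖ ^ 2
  -- Cauchy–Schwarz against `z ∈ span {u, w}` gives `t ^ 2 ≤ ‖z‖ ^ 2 ≤ t * (1 + ‖⟪u, w⟫‖)`
  set z := α • u + (starRingEnd 𝕜) β • w
  have hzv : ⟪z, v⟫_𝕜 = t := by
    rw [inner_add_left, inner_smul_left, inner_smul_left, ← inner_conj_symm w v,
      RCLike.conj_conj, RCLike.conj_mul, RCLike.mul_conj]
    push_cast [t]
    rfl
  have ht_le_norm : t ≤ ‖z‖ := by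
    have := norm_inner_le_norm (𝕜 := 𝕜) z v
    rwa [hzv, hv, mul_one, RCLike.norm_ofReal, abs_of_nonneg (by positivity)] at this
  have hnorm_z : ‖z‖ ^ 2 ≤ t + 2 * (‖α‖ * ‖β‖ * ‖⟪u, w⟫_𝕜‖) := by
    have hcross : RCLike.re ⟪α • u, (starRingEnd 𝕜) β • w⟫_𝕜 ≤ ‖α‖ * ‖β‖ * ‖⟪u, w⟫_𝕜‖ := by
      refine (RCLike.re_le_norm _).trans_eq ?_
      rw [inner_smul_left, inner_smul_right, norm_mul, norm_mul, RCLike.norm_conj,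
        RCLike.norm_conj, mul_assoc]
    rw [norm_add_sq (𝕜 := 𝕜), norm_smul, norm_smul, RCLike.norm_conj, hu, hw]
    linarith
  have hamgm : 2 * (‖α‖ * ‖β‖) ≤ t := by nlinarith [sq_nonneg (‖α‖ - ‖β‖)]
  have ht_sq : t * t ≤ t * (1 + ‖⟪u, w⟫_𝕜‖) :=
    calc t * t ≤ ‖z‖ ^ 2 := by rw [sq]; exact mul_self_le_mul_self (by positivity) ht_le_norm
      _ ≤ t + 2 * (‖α‖ * ‖β‖) * ‖⟪u, w⟫_𝕜‖ := by linarith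
      _ ≤ t + t * ‖⟪u, w⟫_𝕜‖ := by gcongr
      _ = t * (1 + ‖⟪u, w⟫_𝕜‖) := by ring
  rcases (show 0 ≤ t by positivity).eq_or_lt with ht | ht
  · rw [← ht]; positivity
  · exact le_of_mul_le_mul_left ht_sq ht

end InnerProductSpace

/-- `S x ↦ T x` is a well-defined isometry on the range of `S`; extend it to the whole space. -/
theorem LinearMap.exists_linearIsometry_comp_eq_of_norm_eq
    {𝕜 E V : Type*} [RCLike 𝕜] [AddCommGroup E] [Module 𝕜 E]
    [NormedAddCommGroup V] [InnerProductSpace 𝕜 V] [FiniteDimensional 𝕜 V]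
    (S T : E →ₗ[𝕜] V) (h : ∀ x, ‖T x‖ = ‖S x‖) :
    ∃ L : V →ₗᵢ[𝕜] V, ∀ x, L (S x) = T x := by
  have hker : LinearMap.ker S ≤ LinearMap.ker T := fun x hx => by
    rw [LinearMap.mem_ker, ← norm_eq_zero, h, norm_eq_zero, ← LinearMap.mem_ker]
    exact hx
  let φ : LinearMap.range S →ₗ[𝕜] V :=
    (LinearMap.ker S).liftQ T hker ∘ₗ S.quotKerEquivRange.symm.toLinearMap
  have hφ (x : E) : φ ⟨S x, LinearMap.mem_range_self S x⟩ = T x := by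
    simp [φ, LinearMap.quotKerEquivRange_symm_apply_image]
  let L : LinearMap.range S →ₗᵢ[𝕜] V :=
    { φ with norm_map' := by rintro ⟨_, x, rfl⟩; exact (congrArg norm (hφ x)).trans (h x) }
  exact ⟨L.extend, fun x => (L.extend_apply ⟨S x, _⟩).trans (hφ x)⟩

namespace Matrix

section EuclideanVec

variable {𝕜 m n : Type*} [RCLike 𝕜] [Fintype m] [Fintype n]

noncomputable def euclideanVec (X : Matrix m n 𝕜) : EuclideanSpace 𝕜 (n × m) :=
  WithLp.toLp 2 X.vec

theorem inner_euclideanVec (X Y : Matrix m n 𝕜) :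
    ⟪X.euclideanVec, Y.euclideanVec⟫_𝕜 = (Xᴴ * Y).trace := by
  rw [EuclideanSpace.inner_eq_star_dotProduct, dotProduct_comm]
  exact star_vec_dotProduct_vec X Y

theorem norm_euclideanVec_sq (X : Matrix m n 𝕜) :
    ‖X.euclideanVec‖ ^ 2 = RCLike.re (Xᴴ * X).trace := by
  rw [norm_sq_eq_re_inner (𝕜 := 𝕜), inner_euclideanVec]

theorem norm_euclideanVec_unitary_mul [DecidableEq m] {U : Matrix m m 𝕜}
    (hU : U ∈ unitaryGroup m 𝕜) (X : Matrix m n 𝕜) :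
    ‖(U * X).euclideanVec‖ = ‖X.euclideanVec‖ := by
  have hUU : Uᴴ * U = 1 := mem_unitaryGroup_iff'.mp hU
  rw [← sq_eq_sq₀ (norm_nonneg _) (norm_nonneg _), norm_euclideanVec_sq, norm_euclideanVec_sq,
    conjTranspose_mul, Matrix.mul_assoc, ← Matrix.mul_assoc Uᴴ, hUU, Matrix.one_mul]

end EuclideanVec

variable {n : ℕ}

namespace PosSemidef

open scoped MatrixOrder in
theorem sqrt_mul_self {A : Matrix (Fin n) (Fin n) ℂ} (hA : A.PosSemidef) :
    hA.sqrt * hA.sqrt = A := by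
  rw [show hA.sqrt = cfc Real.sqrt A by rw [hA.1.cfc_eq]; rfl, ← cfc_mul Real.sqrt Real.sqrt A]
  conv_rhs => rw [← cfc_id' ℝ A]
  exact cfc_congr fun x hx => Real.mul_self_sqrt (spectrum_nonneg_of_nonneg hA.nonneg hx)

theorem sqrt_congr {A B : Matrix (Fin n) (Fin n) ℂ} (h : A = B) (hA : A.PosSemidef)
    (hB : B.PosSemidef) : hA.sqrt = hB.sqrt := by
  subst h; rfl

theorem norm_euclideanVec_sqrt_sq {A : Matrix (Fin n) (Fin n) ℂ} (hA : A.PosSemidef) :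
    ‖hA.sqrt.euclideanVec‖ ^ 2 = A.trace.re := by
  rw [norm_euclideanVec_sq, hA.posSemidef_sqrt.isHermitian.eq, hA.sqrt_mul_self]
  rfl

theorem norm_euclideanVec_sqrt_eq_one {A : Matrix (Fin n) (Fin n) ℂ} (hA : A.PosSemidef)
    (htr : A.trace = 1) : ‖hA.sqrt.euclideanVec‖ = 1 := by
  rw [← pow_eq_one_iff_of_nonneg (norm_nonneg _) two_ne_zero, norm_euclideanVec_sqrt_sq, htr,
    Complex.one_re]

theorem trace_eq_ofReal_re {ι : Type*} [Fintype ι] {A : Matrix ι ι ℂ} (hA : A.PosSemidef) :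
    A.trace = (A.trace.re : ℂ) :=
  Complex.eq_re_of_ofReal_le (by exact_mod_cast hA.trace_nonneg)

/-- Cauchy–Schwarz for `Tr(Q √N √N) = ⟪√N, Q √N⟫`. -/
theorem norm_trace_unitary_mul_le {Q N : Matrix (Fin n) (Fin n) ℂ}
    (hQ : Q ∈ unitaryGroup (Fin n) ℂ) (hN : N.PosSemidef) :
    ‖(Q * N).trace‖ ≤ N.trace.re := by
  have hS : hN.sqrtᴴ = hN.sqrt := hN.posSemidef_sqrt.isHermitian.eq
  have htrace : (Q * N).trace = ⟪hN.sqrt.euclideanVec, (Q * hN.sqrt).euclideanVec⟫_ℂ := by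
    conv_lhs => rw [← hN.sqrt_mul_self]
    rw [inner_euclideanVec, hS, ← Matrix.mul_assoc, trace_mul_comm]
  calc ‖(Q * N).trace‖
      ≤ ‖hN.sqrt.euclideanVec‖ * ‖(Q * hN.sqrt).euclideanVec‖ := by
        rw [htrace]; exact norm_inner_le_norm _ _
    _ = N.trace.re := by rw [norm_euclideanVec_unitary_mul hQ, ← sq, norm_euclideanVec_sqrt_sq]

end PosSemidef

theorem norm_toEuclideanCLM_apply_eq {ι : Type*} [Fintype ι] [DecidableEq ι]
    {A B : Matrix ι ι ℂ} (h : Aᴴ * A = Bᴴ * B) (x : EuclideanSpace ℂ ι) :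
    ‖toEuclideanCLM (𝕜 := ℂ) A x‖ = ‖toEuclideanCLM (𝕜 := ℂ) B x‖ := by
  simp only [ContinuousLinearMap.apply_norm_eq_sqrt_inner_adjoint_left,
    ← ContinuousLinearMap.star_eq_adjoint, ← ContinuousLinearMap.mul_def, ← map_star, ← map_mul,
    star_eq_conjTranspose, h]

theorem exists_unitary_mul_sqrt_eq (M : Matrix (Fin n) (Fin n) ℂ) :
    ∃ U ∈ unitaryGroup (Fin n) ℂ, U * (posSemidef_conjTranspose_mul_self M).sqrt = M := by
  set H := (posSemidef_conjTranspose_mul_self M).sqrt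
  have hH : Hᴴ * H = Mᴴ * M := by
    rw [(posSemidef_conjTranspose_mul_self M).posSemidef_sqrt.isHermitian.eq,
      PosSemidef.sqrt_mul_self]
  obtain ⟨L, hL⟩ := LinearMap.exists_linearIsometry_comp_eq_of_norm_eq
    (toEuclideanCLM (𝕜 := ℂ) H).toLinearMap (toEuclideanCLM (𝕜 := ℂ) M).toLinearMap
    (norm_toEuclideanCLM_apply_eq hH.symm)
  let e := toEuclideanCLM (n := Fin n) (𝕜 := ℂ)
  let u := Unitary.linearIsometryEquiv.symm (L.toLinearIsometryEquiv rfl)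
  refine ⟨e.symm u, Unitary.map_mem e.symm u.2, ?_⟩
  rw [← e.symm_apply_apply H, ← map_mul, e.symm_apply_eq]
  ext1 x
  exact hL x

end Matrix

open Matrix

section Fidelity

variable {n : ℕ} {a b : Matrix (Fin n) (Fin n) ℂ} (ha : a.PosSemidef) (hb : b.PosSemidef)

/-- `√a b √a = Mᴴ M` for `M = √b √a`, so the fidelity is the trace norm of `√b √a`. -/
theorem fidelity_eq_trace_sqrt :
    (fidelity ha hb : ℂ) =
      (posSemidef_conjTranspose_mul_self (hb.sqrt * ha.sqrt)).sqrt.trace := by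
  have hM : ha.sqrt * b * ha.sqrt = (hb.sqrt * ha.sqrt)ᴴ * (hb.sqrt * ha.sqrt) := by
    conv_lhs => rw [← hb.sqrt_mul_self]
    rw [conjTranspose_mul, hb.posSemidef_sqrt.isHermitian.eq, ha.posSemidef_sqrt.isHermitian.eq]
    simp only [Matrix.mul_assoc]
  rw [fidelity, PosSemidef.sqrt_congr hM _ (posSemidef_conjTranspose_mul_self _),
    ← PosSemidef.trace_eq_ofReal_re (PosSemidef.posSemidef_sqrt _)]

theorem exists_unitary_trace_sqrt_mul_mul_sqrt_eq_fidelity :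
    ∃ U ∈ unitaryGroup (Fin n) ℂ, (ha.sqrt * U * hb.sqrt).trace = fidelity ha hb := by
  obtain ⟨V, hV, hVH⟩ := exists_unitary_mul_sqrt_eq (hb.sqrt * ha.sqrt)
  refine ⟨star V, Unitary.star_mem hV, ?_⟩
  rw [fidelity_eq_trace_sqrt]
  set H := (posSemidef_conjTranspose_mul_self (hb.sqrt * ha.sqrt)).sqrt
  rw [Matrix.mul_assoc, trace_mul_comm, Matrix.mul_assoc, ← hVH, ← Matrix.mul_assoc,
    Unitary.star_mul_self_of_mem hV, Matrix.one_mul]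

theorem norm_trace_sqrt_mul_mul_sqrt_le_fidelity {Q : Matrix (Fin n) (Fin n) ℂ}
    (hQ : Q ∈ unitaryGroup (Fin n) ℂ) :
    ‖(ha.sqrt * Q * hb.sqrt).trace‖ ≤ fidelity ha hb := by
  obtain ⟨V, hV, hVH⟩ := exists_unitary_mul_sqrt_eq (hb.sqrt * ha.sqrt)
  set H := (posSemidef_conjTranspose_mul_self (hb.sqrt * ha.sqrt)).sqrt
  have hF : fidelity ha hb = H.trace.re := by
    rw [← Complex.ofReal_re (fidelity ha hb), fidelity_eq_trace_sqrt]
  rw [hF, Matrix.mul_assoc, trace_mul_comm, Matrix.mul_assoc, ← hVH, ← Matrix.mul_assoc]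
  exact PosSemidef.norm_trace_unitary_mul_le (mul_mem hQ hV) (PosSemidef.posSemidef_sqrt _)

end Fidelity

theorem public_coin_soundness_algebra_general {n : ℕ}
    {ρ σ τ : Matrix (Fin n) (Fin n) ℂ}
    (hρ : ρ.PosSemidef) (hρtr : ρ.trace = 1)
    (hσ : σ.PosSemidef) (hσtr : σ.trace = 1)
    (hτ : τ.PosSemidef) (hτtr : τ.trace = 1)
    (ζ : ℝ)
    (h : fidelity hσ hτ ^ 2 ≤ ζ) :
    (1 / 2) * fidelity hσ hρ ^ 2 + (1 / 2) * fidelity hρ hτ ^ 2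
      ≤ 1 / 2 + Real.sqrt ζ / 2 := by
  obtain ⟨U₁, hU₁, hF₁⟩ := exists_unitary_trace_sqrt_mul_mul_sqrt_eq_fidelity hσ hρ
  obtain ⟨U₂, hU₂, hF₂⟩ := exists_unitary_trace_sqrt_mul_mul_sqrt_eq_fidelity hρ hτ
  have hu : ‖(U₁ᴴ * hσ.sqrt).euclideanVec‖ = 1 := by
    rw [norm_euclideanVec_unitary_mul (U := U₁ᴴ) (Unitary.star_mem hU₁),
      hσ.norm_euclideanVec_sqrt_eq_one hσtr]
  have hw : ‖(U₂ * hτ.sqrt).euclideanVec‖ = 1 := by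
    rw [norm_euclideanVec_unitary_mul hU₂, hτ.norm_euclideanVec_sqrt_eq_one hτtr]
  have key :=
    norm_inner_sq_add_norm_inner_sq_le (𝕜 := ℂ) hu (hρ.norm_euclideanVec_sqrt_eq_one hρtr) hw
  simp only [inner_euclideanVec, conjTranspose_mul, conjTranspose_conjTranspose,
    hσ.posSemidef_sqrt.isHermitian.eq, hρ.posSemidef_sqrt.isHermitian.eq, ← Matrix.mul_assoc,
    hF₁, hF₂, Complex.norm_real, Real.norm_eq_abs, sq_abs] at key
  have hστ := norm_trace_sqrt_mul_mul_sqrt_le_fidelity hσ hτ (mul_mem hU₁ hU₂)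
  have hF_le : fidelity hσ hτ ≤ Real.sqrt ζ := (le_abs_self _).trans (Real.abs_le_sqrt h)
  rw [← Matrix.mul_assoc] at hστ
  linarith

/-- Public-coin soundness algebra: if `F(σ,τ)² ≤ ζ`, then
`(1/2)·F(σ,ρ)² + (1/2)·F(ρ,τ)² ≤ 1/2 + √ζ/2`. -/
theorem public_coin_soundness_algebra {n : ℕ}
    {ρ σ τ : Matrix (Fin n) (Fin n) ℂ}
    (hρ : ρ.PosSemidef) (hρtr : ρ.trace = 1)
    (hσ : σ.PosSemidef) (hσtr : σ.trace = 1)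
    (hτ : τ.PosSemidef) (hτtr : τ.trace = 1)
    (ζ : ℝ) (hζ : 0 ≤ ζ)
    (h : fidelity hσ hτ ^ 2 ≤ ζ) :
    (1 / 2) * fidelity hσ hρ ^ 2 + (1 / 2) * fidelity hρ hτ ^ 2
      ≤ 1 / 2 + Real.sqrt ζ / 2 :=
  public_coin_soundness_algebra_general hρ hρtr hσ hσtr hτ hτtr ζ h
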